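/- Let h>0, α,β∈(0,1] and k,s∈ℕ. Then for every n∈ℕ, the fractional h-sum of order β of the function φ_{k,s} satisfies (S_β φ_{k,s})(n) = φ_{k,s+1}(n). (This is the second power-rule formula of Proposition 5 of the paper, with the evaluation point made precise: applying the β-order fractional h-sum to φ_{k,s} raises the index s by one without shifting the argument.) -/

import Mathlib

/-- `c γ m = Γ(γ+m)/(Γ(γ)·Γ(m+1))`. -/
noncomputable def cCoeff (γ : ℝ) (m : ℕ) : ℝ :=
  Real.Gamma (γ + m) / (Real.Gamma γ * Real.Gamma (m + 1))

/-- Fractional `h`-sum of order `γ`: `(S_γ u)(n) = h^γ·∑_{k=0}^{n} c_γ(n−k)·u(k)`. -/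
noncomputable def fracSum (h γ : ℝ) (u : ℕ → ℝ) (n : ℕ) : ℝ :=
  h ^ γ * ∑ k ∈ Finset.range (n + 1), cCoeff γ (n - k) * u k

/-- The function `φ_{k,s}` of the paper. -/
noncomputable def phi (h α β : ℝ) (k s : ℕ) (n : ℤ) : ℝ :=
  if (k : ℤ) ≤ n then
    Real.Gamma ((n : ℝ) - (k : ℝ) + 1 + (k : ℝ) * α + (s : ℝ) * β)
      / (Real.Gamma ((k : ℝ) * α + (s : ℝ) * β + 1) * Real.Gamma ((n : ℝ) - (k : ℝ) + 1))
      * h ^ ((k : ℝ) * α + (s : ℝ) * β)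
  else 0

/-!
Put `γ = kα + sβ + 1`. Then `φ_{k,s}` vanishes below `k` and `φ_{k,s}(k + m) = c_γ(m) h^{γ-1}`,
so `S_β φ_{k,s}` is `φ_{k,s}` shifted by `k` and convolved with `c_β`. For `γ > 0` the
coefficient `c_γ(m) = γ(γ+1)⋯(γ+m-1)/m!` is the multichoose number, and Chu–Vandermonde gives
`c_β ∗ c_γ = c_{β+γ}`; as `β + γ = kα + (s+1)β + 1`, the result is `φ_{k,s+1}`.
-/

open Finset

theorem Ring.multichoose_add {R : Type*} [CommRing R] [BinomialRing R] (r s : R) (k : ℕ) :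
    Ring.multichoose (r + s) k
      = ∑ ij ∈ antidiagonal k, Ring.multichoose r ij.1 * Ring.multichoose s ij.2 := by
  have hsign := Ring.add_choose_eq (r := -r) (s := -s) k (Commute.all _ _)
  rw [← neg_add, Ring.choose_neg'] at hsign
  -- `multichoose r k = (-1)^k choose (-r) k`: Chu–Vandermonde at `-r`, `-s`.
  refine MulAction.injective (Int.negOnePow k) ?_
  dsimp only
  rw [hsign, smul_sum]
  refine sum_congr rfl fun ij hij => ?_
  rw [Ring.choose_neg', Ring.choose_neg', smul_mul_smul_comm, ← Int.negOnePow_add]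
  simp only [← Nat.cast_add, mem_antidiagonal.mp hij]

theorem Real.Gamma_add_nat_eq_ascPochhammer_eval_mul {x : ℝ} (hx : 0 < x) (m : ℕ) :
    Real.Gamma (x + m) = (ascPochhammer ℝ m).eval x * Real.Gamma x := by
  induction m with
  | zero => simp
  | succ m ih =>
    rw [Nat.cast_succ, ← add_assoc, Real.Gamma_add_one (by positivity), ih,
      ascPochhammer_succ_eval]
    ring

theorem cCoeff_eq_multichoose {γ : ℝ} (hγ : 0 < γ) (m : ℕ) :
    cCoeff γ m = Ring.multichoose γ m := by
  have hpoch := Ring.factorial_nsmul_multichoose_eq_ascPochhammer γ m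
  rw [Polynomial.ascPochhammer_smeval_eq_eval, nsmul_eq_mul] at hpoch
  rw [cCoeff, Real.Gamma_add_nat_eq_ascPochhammer_eval_mul hγ, ← hpoch,
    Real.Gamma_nat_eq_factorial]
  field_simp [(Real.Gamma_pos_of_pos hγ).ne']

theorem sum_antidiagonal_cCoeff_mul_cCoeff {γ δ : ℝ} (hγ : 0 < γ) (hδ : 0 < δ) (n : ℕ) :
    ∑ ij ∈ antidiagonal n, cCoeff γ ij.1 * cCoeff δ ij.2 = cCoeff (γ + δ) n := by
  simp only [cCoeff_eq_multichoose hγ, cCoeff_eq_multichoose hδ,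
    cCoeff_eq_multichoose (add_pos hγ hδ), Ring.multichoose_add]

theorem fracSum_eq_sum_antidiagonal (h γ : ℝ) (u : ℕ → ℝ) (n : ℕ) :
    fracSum h γ u n = h ^ γ * ∑ ij ∈ antidiagonal n, u ij.1 * cCoeff γ ij.2 := by
  rw [fracSum, Nat.sum_antidiagonal_eq_sum_range_succ (fun i j => u i * cCoeff γ j)]
  simp only [mul_comm]

theorem fracSum_cCoeff_mul_const {γ δ : ℝ} (hγ : 0 < γ) (hδ : 0 < δ) (h c : ℝ) (n : ℕ) :
    fracSum h γ (fun m => cCoeff δ m * c) n = h ^ γ * cCoeff (δ + γ) n * c := by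
  rw [fracSum_eq_sum_antidiagonal, ← sum_antidiagonal_cCoeff_mul_cCoeff hδ hγ, mul_assoc, sum_mul]
  simp only [mul_right_comm _ c]

theorem fracSum_eq_zero_of_forall_le {h γ : ℝ} {u : ℕ → ℝ} {n : ℕ}
    (hu : ∀ j ≤ n, u j = 0) : fracSum h γ u n = 0 := by
  rw [fracSum, sum_eq_zero fun j hj => by rw [hu j (mem_range_succ_iff.mp hj), mul_zero],
    mul_zero]

theorem fracSum_add_of_forall_lt {h γ : ℝ} {u : ℕ → ℝ} {k : ℕ} (hu : ∀ j < k, u j = 0)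
    (m : ℕ) : fracSum h γ u (k + m) = fracSum h γ (fun j => u (k + j)) m := by
  have hlow : ∑ j ∈ range k, cCoeff γ (k + m - j) * u j = 0 :=
    sum_eq_zero fun j hj => by rw [hu j (mem_range.mp hj), mul_zero]
  rw [fracSum, fracSum, add_assoc, sum_range_add, hlow, zero_add]
  simp only [Nat.add_sub_add_left]

theorem phi_of_lt {h α β : ℝ} {k s : ℕ} {n : ℤ} (hn : n < k) : phi h α β k s n = 0 :=
  if_neg (not_le.mpr hn)

theorem phi_natCast_add (h α β : ℝ) (k s m : ℕ) :
    phi h α β k s ((k + m : ℕ) : ℤ)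
      = cCoeff (k * α + s * β + 1) m * h ^ ((k : ℝ) * α + s * β) := by
  rw [phi, if_pos (by omega), cCoeff]
  push_cast
  ring_nf

theorem fracSum_phi_second_power_rule_general (h α β : ℝ) (hh : 0 < h)
    (hα1 : 0 < α) (hβ1 : 0 < β)
    (k s : ℕ) (n : ℕ) :
    fracSum h β (fun m : ℕ => phi h α β k s (m : ℤ)) n
      = phi h α β k (s + 1) (n : ℤ) := by
  rcases lt_or_ge n k with hnk | hkn
  · rw [fracSum_eq_zero_of_forall_le fun j hj => phi_of_lt (by omega), phi_of_lt (by omega)]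
  obtain ⟨m, rfl⟩ := Nat.exists_eq_add_of_le hkn
  have hγ : 0 < (k : ℝ) * α + s * β + 1 := by positivity
  rw [fracSum_add_of_forall_lt (fun j hj => phi_of_lt (by omega))]
  simp only [phi_natCast_add]
  rw [fracSum_cCoeff_mul_const hβ1 hγ, mul_right_comm, ← Real.rpow_add hh, mul_comm]
  push_cast
  ring_nf

theorem fracSum_phi_second_power_rule (h α β : ℝ) (hh : 0 < h)
    (hα1 : 0 < α) (hα2 : α ≤ 1) (hβ1 : 0 < β) (hβ2 : β ≤ 1)
    (k s : ℕ) (n : ℕ) :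
    fracSum h β (fun m : ℕ => phi h α β k s (m : ℤ)) n
      = phi h α β k (s + 1) (n : ℤ) :=
  fracSum_phi_second_power_rule_general h α β hh hα1 hβ1 k s n
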